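/- arXiv:1909.07796 — 4 statements merged into one kernel-verified Lean document; each statement's English description precedes it below -/
import Mathlib

section
/- For s ∈ ℕ, the modified operator D_{2,s} = D2 − s(s+α)/(1−t) satisfies the commutation relation [D_{2,s}, D1] = D_{2,s}, where D1 = (t−1)∂t and D2 = (1−t)∂t² − (α+1)∂t. -/
/-- The operator `D1 = (t-1) ∂_t`. -/
noncomputable def D1 (f : ℝ → ℝ) : ℝ → ℝ := fun t => (t - 1) * deriv f t

/-- The operator `D2 = (1-t) ∂_t² - (α+1) ∂_t`. -/
noncomputable def D2 (α : ℝ) (f : ℝ → ℝ) : ℝ → ℝ :=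
  fun t => (1 - t) * deriv (deriv f) t - (α + 1) * deriv f t

/-- The modified operator `D_{2,s} = D2 − s(s+α)/(1−t)`. -/
noncomputable def D2s (α : ℝ) (s : ℕ) (f : ℝ → ℝ) : ℝ → ℝ :=
  fun t => D2 α f t - (s : ℝ) * ((s : ℝ) + α) * f t / (1 - t)

/-- The commutation relation `[D_{2,s}, D1] = D_{2,s}` away from `t = 1`. -/
theorem statement7 (α : ℝ) (s : ℕ) (f : ℝ → ℝ) (hf : ContDiff ℝ (⊤ : ℕ∞) f) (t : ℝ) (ht : t ≠ 1) :
    D2s α s (D1 f) t - D1 (D2s α s f) t = D2s α s f t := by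
  have hf0 : ContDiff ℝ ((⊤:ℕ∞):WithTop ℕ∞) f := hf.of_le (by simp)
  have hf1 : ContDiff ℝ ((⊤:ℕ∞):WithTop ℕ∞) (deriv f) := (contDiff_infty_iff_deriv.mp hf0).2
  have hf2 : ContDiff ℝ ((⊤:ℕ∞):WithTop ℕ∞) (deriv (deriv f)) := (contDiff_infty_iff_deriv.mp hf1).2
  have hf3 : ContDiff ℝ ((⊤:ℕ∞):WithTop ℕ∞) (deriv (deriv (deriv f))) := (contDiff_infty_iff_deriv.mp hf2).2
  have ht' : (1 : ℝ) - t ≠ 0 := fun h => ht (by linarith)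
  -- derivative of D1 f
  have hD1 : deriv (D1 f) = fun x => deriv f x + (x - 1) * deriv (deriv f) x := by
    funext x
    have h : HasDerivAt (D1 f) (1 * deriv f x + (x - 1) * deriv (deriv f) x) x := by
      exact ((hasDerivAt_id x).sub_const 1).mul
        ((hf1.differentiable (by simp) x).hasDerivAt)
    simpa using h.deriv
  have hD1' : deriv (deriv (D1 f)) t
      = 2 * deriv (deriv f) t + (t - 1) * deriv (deriv (deriv f)) t := by
    rw [hD1]
    have h : HasDerivAt (fun x => deriv f x + (x - 1) * deriv (deriv f) x)
        (deriv (deriv f) t + (1 * deriv (deriv f) t + (t - 1) * deriv (deriv (deriv f)) t)) t :=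
      ((hf1.differentiable (by simp) t).hasDerivAt).add
        (((hasDerivAt_id t).sub_const 1).mul ((hf2.differentiable (by simp) t).hasDerivAt))
    rw [h.deriv]; ring
  -- derivative of D2s f at t
  have hD2s : deriv (D2s α s f) t
      = (-1) * deriv (deriv f) t + (1 - t) * deriv (deriv (deriv f)) t
        - (α + 1) * deriv (deriv f) t
        - (s : ℝ) * ((s : ℝ) + α) *
          (deriv f t * (1 - t) - f t * (-1)) / (1 - t) ^ 2 := by
    have h : HasDerivAt (D2s α s f)
        (((-1) * deriv (deriv f) t + (1 - t) * deriv (deriv (deriv f)) t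
          - (α + 1) * deriv (deriv f) t)
          - (s : ℝ) * ((s : ℝ) + α) *
            (deriv f t * (1 - t) - f t * (-1)) / (1 - t) ^ 2) t := by
      have h1 : HasDerivAt (fun x => (1 - x) * deriv (deriv f) x)
          ((-1) * deriv (deriv f) t + (1 - t) * deriv (deriv (deriv f)) t) t :=
by
        have := ((hasDerivAt_id t).const_sub 1).mul ((hf2.differentiable (by simp) t).hasDerivAt)
        exact this
      have h2 : HasDerivAt (fun x => (α + 1) * deriv f x)
          ((α + 1) * deriv (deriv f) t) t :=
        ((hf1.differentiable (by simp) t).hasDerivAt).const_mul _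
      have h3 : HasDerivAt (fun x => (s : ℝ) * ((s : ℝ) + α) * f x / (1 - x))
          ((s : ℝ) * ((s : ℝ) + α) *
            (deriv f t * (1 - t) - f t * (-1)) / (1 - t) ^ 2) t := by
        have hnum : HasDerivAt (fun x => (s : ℝ) * ((s : ℝ) + α) * f x)
            ((s : ℝ) * ((s : ℝ) + α) * deriv f t) t :=
          ((hf0.differentiable (by simp) t).hasDerivAt).const_mul _
        have hden : HasDerivAt (fun x => (1 : ℝ) - x) (-1) t := by
          simpa using ((hasDerivAt_id t).const_sub 1)
        have := hnum.div hden ht'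
        exact this.congr_deriv (by ring)
      exact (h1.sub h2).sub h3
    rw [h.deriv]
  show ((1 - t) * deriv (deriv (D1 f)) t - (α + 1) * deriv (D1 f) t
      - (s : ℝ) * ((s : ℝ) + α) * (D1 f t) / (1 - t)) - (t - 1) * deriv (D2s α s f) t
      = D2s α s f t
  rw [hD1', hD2s, hD1]
  simp only [D1, D2s, D2]
  field_simp
  ring
end

section
/- The partial differential operators Ď1 = (x₁−1)∂_{x₁} + Σ_{j=2}^d x_j ∂_{x_j} and Ď2 = (1−x₁)∂_{x₁}² + Σ_{j=2}^d x_j ∂_{x_j}² − 2Σ_{j=2}^d x_j ∂_{x_j}∂_{x₁} − (γ₂+⋯+γ_{d+1}+d+1−1)∂_{x₁} + Σ_{j=2}^d (γ_j+1)∂_{x_j} satisfy the commutation relation [Ď2, Ď1] = Ď2. -/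
/-- The partial derivative `∂f/∂xᵢ` at `x`. -/
noncomputable def pd {m : ℕ} (i : Fin m) (f : (Fin m → ℝ) → ℝ) (x : Fin m → ℝ) : ℝ :=
  deriv (fun t : ℝ => f (Function.update x i t)) (x i)

variable {m : ℕ}

theorem hasDerivAt_pd {i : Fin m} {f : (Fin m → ℝ) → ℝ} {x : Fin m → ℝ}
    (hf : DifferentiableAt ℝ f x) :
    HasDerivAt (fun t : ℝ => f (Function.update x i t)) (fderiv ℝ f x (Pi.single i 1)) (x i) := by
  have hF : HasFDerivAt f (fderiv ℝ f x) (Function.update x i (x i)) := by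
    rw [Function.update_eq_self]; exact hf.hasFDerivAt
  exact hF.comp_hasDerivAt (x i) (hasDerivAt_update x i (x i))

theorem pd_eq_fderiv {i : Fin m} {f : (Fin m → ℝ) → ℝ} {x : Fin m → ℝ}
    (hf : DifferentiableAt ℝ f x) : pd i f x = fderiv ℝ f x (Pi.single i 1) :=
  (hasDerivAt_pd hf).deriv

theorem contDiff_pd {i : Fin m} {f : (Fin m → ℝ) → ℝ} (hf : ContDiff ℝ (⊤ : ℕ∞) f) :
    ContDiff ℝ (⊤ : ℕ∞) (pd i f) := by
  have : pd i f = fun x => fderiv ℝ f x (Pi.single i 1) := by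
    funext x
    exact pd_eq_fderiv (hf.differentiable (by simp) x)
  rw [this]
  exact (hf.fderiv_right (by simp)).clm_apply contDiff_const

theorem diffAt_slice {i : Fin m} {u : (Fin m → ℝ) → ℝ} {x : Fin m → ℝ} {s : ℝ}
    (hu : ContDiff ℝ (⊤ : ℕ∞) u) :
    DifferentiableAt ℝ (fun t : ℝ => u (Function.update x i t)) s :=
  ((hu.differentiable (by simp)) _).comp _ (hasDerivAt_update x i s).differentiableAt

theorem pd_comm {i j : Fin m} {f : (Fin m → ℝ) → ℝ} (hf : ContDiff ℝ (⊤ : ℕ∞) f)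
    (x : Fin m → ℝ) : pd i (pd j f) x = pd j (pd i f) x := by
  have hdf : ∀ (k : Fin m) (y : Fin m → ℝ), DifferentiableAt ℝ (pd k f) y := fun k y =>
    (contDiff_pd hf).differentiable (by simp) y
  have hpd : ∀ (k : Fin m), pd k f = fun y => fderiv ℝ f y (Pi.single k 1) := by
    intro k; funext y; exact pd_eq_fderiv (hf.differentiable (by simp) y)
  rw [pd_eq_fderiv (hdf j x), pd_eq_fderiv (hdf i x), hpd i, hpd j]
  have hff : DifferentiableAt ℝ (fderiv ℝ f) x :=
    ((hf.fderiv_right (m := (⊤ : ℕ∞)) ((by simp))).differentiable (by simp)) x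
  rw [fderiv_clm_apply hff (differentiableAt_const _), fderiv_clm_apply hff (differentiableAt_const _)]
  simp only [fderiv_fun_const, Pi.zero_apply, ContinuousLinearMap.comp_zero, zero_add,
    ContinuousLinearMap.add_apply, ContinuousLinearMap.flip_apply]
  exact (hf.contDiffAt.isSymmSndFDerivAt (by rw [minSmoothness_of_isRCLikeNormedField]; exact WithTop.coe_le_coe.mpr le_top)) _ _

theorem pd_comm_fun {i j : Fin m} {f : (Fin m → ℝ) → ℝ} (hf : ContDiff ℝ (⊤ : ℕ∞) f) :
    pd i (pd j f) = pd j (pd i f) := funext (pd_comm hf)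

theorem pd_add {i : Fin m} {u v : (Fin m → ℝ) → ℝ} (hu : ContDiff ℝ (⊤ : ℕ∞) u)
    (hv : ContDiff ℝ (⊤ : ℕ∞) v) (x : Fin m → ℝ) :
    pd i (fun y => u y + v y) x = pd i u x + pd i v x :=
  deriv_add (diffAt_slice hu) (diffAt_slice hv)

theorem pd_sub {i : Fin m} {u v : (Fin m → ℝ) → ℝ} (hu : ContDiff ℝ (⊤ : ℕ∞) u)
    (hv : ContDiff ℝ (⊤ : ℕ∞) v) (x : Fin m → ℝ) :
    pd i (fun y => u y - v y) x = pd i u x - pd i v x :=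
  deriv_sub (diffAt_slice hu) (diffAt_slice hv)

theorem pd_const_mul {i : Fin m} (c : ℝ) {u : (Fin m → ℝ) → ℝ} (hu : ContDiff ℝ (⊤ : ℕ∞) u)
    (x : Fin m → ℝ) :
    pd i (fun y => c * u y) x = c * pd i u x :=
  deriv_const_mul c (diffAt_slice hu)

theorem pd_sum {i : Fin m} {α : Type*} {s : Finset α} {F : α → (Fin m → ℝ) → ℝ}
    (hF : ∀ a ∈ s, ContDiff ℝ (⊤ : ℕ∞) (F a)) (x : Fin m → ℝ) :
    pd i (fun y => ∑ a ∈ s, F a y) x = ∑ a ∈ s, pd i (F a) x := by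
  unfold pd
  rw [deriv_fun_sum (fun a ha => diffAt_slice (hF a ha))]

theorem pd_coord_mul {i l : Fin m} {u : (Fin m → ℝ) → ℝ} (hu : ContDiff ℝ (⊤ : ℕ∞) u)
    (x : Fin m → ℝ) :
    pd i (fun y => y l * u y) x = (if i = l then u x else 0) + x l * pd i u x := by
  unfold pd
  have h1 : DifferentiableAt ℝ (fun t : ℝ => Function.update x i t l) (x i) := by
    by_cases h : l = i
    · subst h; simp only [Function.update_self]; exact differentiableAt_id
    · simp only [Function.update_of_ne h]; exact differentiableAt_const _
  rw [deriv_fun_mul h1 (diffAt_slice hu)]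
  have h2 : deriv (fun t : ℝ => Function.update x i t l) (x i) = if i = l then 1 else 0 := by
    by_cases h : l = i
    · subst h; simp [Function.update_self]
    · simp [Function.update_of_ne h, Ne.symm h]
  rw [h2, Function.update_eq_self]
  by_cases h : i = l <;> simp [h]

theorem contDiff_coord {i : Fin m} : ContDiff ℝ (⊤ : ℕ∞) (fun y : Fin m → ℝ => y i) :=
  (ContinuousLinearMap.proj i : (Fin m → ℝ) →L[ℝ] ℝ).contDiff

theorem pd_sum_coord_mul {d : ℕ} {v : Fin (d+1) → (Fin (d+1) → ℝ) → ℝ}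
    (hv : ∀ i, ContDiff ℝ (⊤ : ℕ∞) (v i)) (k : Fin (d+1)) (x : Fin (d+1) → ℝ) :
    pd k (fun y => ∑ i ∈ Finset.Ioi (0 : Fin (d+1)), y i * v i y) x
      = (if 0 < k then v k x else 0)
        + ∑ i ∈ Finset.Ioi (0 : Fin (d+1)), x i * pd k (v i) x := by
  rw [pd_sum (fun a _ => contDiff_coord.mul (hv a))]
  have : ∀ a ∈ Finset.Ioi (0 : Fin (d+1)),
      pd k (fun y => y a * v a y) x = (if k = a then v a x else 0) + x a * pd k (v a) x :=
    fun a _ => pd_coord_mul (hv a) x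
  rw [Finset.sum_congr rfl this, Finset.sum_add_distrib, Finset.sum_ite_eq]
  rcases eq_or_ne k 0 with h | h <;> simp [Finset.mem_Ioi, h, Fin.pos_iff_ne_zero]

theorem contDiff_shape {d : ℕ} {u : (Fin (d+1) → ℝ) → ℝ} {v : Fin (d+1) → (Fin (d+1) → ℝ) → ℝ}
    (hu : ContDiff ℝ (⊤ : ℕ∞) u) (hv : ∀ i, ContDiff ℝ (⊤ : ℕ∞) (v i)) :
    ContDiff ℝ (⊤ : ℕ∞) (fun y => (y 0 - 1) * u y
      + ∑ i ∈ Finset.Ioi (0 : Fin (d+1)), y i * v i y) :=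
  ((contDiff_coord.sub contDiff_const).mul hu).add
    (ContDiff.sum fun i _ => contDiff_coord.mul (hv i))

theorem pd_shape {d : ℕ} {u : (Fin (d+1) → ℝ) → ℝ} {v : Fin (d+1) → (Fin (d+1) → ℝ) → ℝ}
    (hu : ContDiff ℝ (⊤ : ℕ∞) u) (hv : ∀ i, ContDiff ℝ (⊤ : ℕ∞) (v i)) (k : Fin (d+1)) (x : Fin (d+1) → ℝ) :
    pd k (fun y => (y 0 - 1) * u y + ∑ i ∈ Finset.Ioi (0 : Fin (d+1)), y i * v i y) x
      = ((if k = 0 then u x else 0) + (x 0 - 1) * pd k u x)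
        + ((if 0 < k then v k x else 0)
          + ∑ i ∈ Finset.Ioi (0 : Fin (d+1)), x i * pd k (v i) x) := by
  have hrw : (fun y : Fin (d+1) → ℝ => (y 0 - 1) * u y
      + ∑ i ∈ Finset.Ioi (0 : Fin (d+1)), y i * v i y)
      = fun y => (y 0 * u y - u y) + ∑ i ∈ Finset.Ioi (0 : Fin (d+1)), y i * v i y := by
    funext y; ring
  rw [hrw, pd_add ((contDiff_coord.mul hu).sub hu)
    (ContDiff.sum fun i _ => contDiff_coord.mul (hv i)),
    pd_sub (contDiff_coord.mul hu) hu, pd_coord_mul hu, pd_sum_coord_mul hv]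
  ring

theorem pd_shape' {d : ℕ} {w u : (Fin (d+1) → ℝ) → ℝ} {v : Fin (d+1) → (Fin (d+1) → ℝ) → ℝ}
    (hw : ContDiff ℝ (⊤ : ℕ∞) w) (hu : ContDiff ℝ (⊤ : ℕ∞) u) (hv : ∀ i, ContDiff ℝ (⊤ : ℕ∞) (v i))
    (k : Fin (d+1)) (x : Fin (d+1) → ℝ) :
    pd k (fun y => w y + ((y 0 - 1) * u y
        + ∑ i ∈ Finset.Ioi (0 : Fin (d+1)), y i * v i y)) x
      = pd k w x + (((if k = 0 then u x else 0) + (x 0 - 1) * pd k u x)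
        + ((if 0 < k then v k x else 0)
          + ∑ i ∈ Finset.Ioi (0 : Fin (d+1)), x i * pd k (v i) x)) := by
  rw [pd_add hw (contDiff_shape hu hv), pd_shape hu hv]

theorem pd_sum_const_mul {d : ℕ} (b : Fin (d+1) → ℝ) {v : Fin (d+1) → (Fin (d+1) → ℝ) → ℝ}
    (hv : ∀ i, ContDiff ℝ (⊤ : ℕ∞) (v i)) (k : Fin (d+1)) (x : Fin (d+1) → ℝ) :
    pd k (fun y => ∑ i ∈ Finset.Ioi (0 : Fin (d+1)), b i * v i y) x
      = ∑ i ∈ Finset.Ioi (0 : Fin (d+1)), b i * pd k (v i) x := by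
  rw [pd_sum (fun a _ => contDiff_const.mul (hv a))]
  exact Finset.sum_congr rfl fun a _ => pd_const_mul (b a) (hv a) x

theorem pd_one_sub_mul {d : ℕ} {A : (Fin (d+1) → ℝ) → ℝ} (hA : ContDiff ℝ (⊤ : ℕ∞) A)
    (k : Fin (d+1)) (x : Fin (d+1) → ℝ) :
    pd k (fun y => (1 - y 0) * A y) x
      = (1 - x 0) * pd k A x - (if k = 0 then A x else 0) := by
  have h : (fun y : Fin (d+1) → ℝ => (1 - y 0) * A y) = fun y => A y - y 0 * A y := by
    funext y; ring
  rw [h, pd_sub hA (contDiff_coord.mul hA), pd_coord_mul hA]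
  rcases eq_or_ne k 0 with h | h <;> simp [h] <;> ring

theorem pd_shapeD2 {d : ℕ} {A D : (Fin (d+1) → ℝ) → ℝ} {B C E : Fin (d+1) → (Fin (d+1) → ℝ) → ℝ}
    (c : ℝ) (b : Fin (d+1) → ℝ)
    (hA : ContDiff ℝ (⊤ : ℕ∞) A) (hD : ContDiff ℝ (⊤ : ℕ∞) D)
    (hB : ∀ i, ContDiff ℝ (⊤ : ℕ∞) (B i)) (hC : ∀ i, ContDiff ℝ (⊤ : ℕ∞) (C i))
    (hE : ∀ i, ContDiff ℝ (⊤ : ℕ∞) (E i)) (k : Fin (d+1)) (x : Fin (d+1) → ℝ) :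
    pd k (fun y => (1 - y 0) * A y
        + ∑ i ∈ Finset.Ioi (0 : Fin (d+1)), y i * B i y
        - 2 * ∑ i ∈ Finset.Ioi (0 : Fin (d+1)), y i * C i y
        - c * D y
        + ∑ i ∈ Finset.Ioi (0 : Fin (d+1)), b i * E i y) x
      = ((1 - x 0) * pd k A x - (if k = 0 then A x else 0))
        + ((if 0 < k then B k x else 0)
          + ∑ i ∈ Finset.Ioi (0 : Fin (d+1)), x i * pd k (B i) x)
        - 2 * ((if 0 < k then C k x else 0)
          + ∑ i ∈ Finset.Ioi (0 : Fin (d+1)), x i * pd k (C i) x)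
        - c * pd k D x
        + ∑ i ∈ Finset.Ioi (0 : Fin (d+1)), b i * pd k (E i) x := by
  have h1 : ContDiff ℝ (⊤ : ℕ∞) (fun y : Fin (d+1) → ℝ => (1 - y 0) * A y) :=
    (contDiff_const.sub contDiff_coord).mul hA
  have h2 : ContDiff ℝ (⊤ : ℕ∞) (fun y : Fin (d+1) → ℝ =>
      ∑ i ∈ Finset.Ioi (0 : Fin (d+1)), y i * B i y) :=
    ContDiff.sum fun i _ => contDiff_coord.mul (hB i)
  have h2' : ContDiff ℝ (⊤ : ℕ∞) (fun y : Fin (d+1) → ℝ =>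
      ∑ i ∈ Finset.Ioi (0 : Fin (d+1)), y i * C i y) :=
    ContDiff.sum fun i _ => contDiff_coord.mul (hC i)
  have h3 : ContDiff ℝ (⊤ : ℕ∞) (fun y : Fin (d+1) → ℝ =>
      2 * ∑ i ∈ Finset.Ioi (0 : Fin (d+1)), y i * C i y) := contDiff_const.mul h2'
  have h4 : ContDiff ℝ (⊤ : ℕ∞) (fun y : Fin (d+1) → ℝ => c * D y) := contDiff_const.mul hD
  have h5 : ContDiff ℝ (⊤ : ℕ∞) (fun y : Fin (d+1) → ℝ =>
      ∑ i ∈ Finset.Ioi (0 : Fin (d+1)), b i * E i y) :=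
    ContDiff.sum fun i _ => contDiff_const.mul (hE i)
  rw [pd_add (((h1.add h2).sub h3).sub h4) h5, pd_sub ((h1.add h2).sub h3) h4,
    pd_sub (h1.add h2) h3, pd_add h1 h2, pd_one_sub_mul hA, pd_sum_coord_mul hB,
    pd_const_mul 2 h2', pd_sum_coord_mul hC, pd_const_mul c hD, pd_sum_const_mul b hE]
theorem sum_split {γ : Type*} (s : Finset γ) (c1 c2 c3 c4 c5 c6 c7 : ℝ)
    (p1 p2 p3 p4 p5 p6 p7 F : γ → ℝ)
    (h : ∀ i ∈ s, F i = c1 * p1 i + c2 * p2 i + c3 * p3 i + c4 * p4 i + c5 * p5 i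
      + c6 * p6 i + c7 * p7 i) :
    ∑ i ∈ s, F i = c1 * ∑ i ∈ s, p1 i + c2 * ∑ i ∈ s, p2 i + c3 * ∑ i ∈ s, p3 i
      + c4 * ∑ i ∈ s, p4 i + c5 * ∑ i ∈ s, p5 i + c6 * ∑ i ∈ s, p6 i
      + c7 * ∑ i ∈ s, p7 i := by
  simp only [Finset.mul_sum, ← Finset.sum_add_distrib]
  exact Finset.sum_congr rfl h

/-- The operator `Ď1 = (x₁−1)∂_{x₁} + Σ_{j=2}^d x_j ∂_{x_j}` (Lean indices shifted by one,
so the space has `d+1` variables `x 0, …, x d`). -/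
noncomputable def D1op {d : ℕ} (f : (Fin (d + 1) → ℝ) → ℝ) (x : Fin (d + 1) → ℝ) : ℝ :=
  (x 0 - 1) * pd 0 f x + ∑ i ∈ Finset.Ioi (0 : Fin (d + 1)), x i * pd i f x

/-- The operator
`Ď2 = (1−x₁)∂_{x₁}² + Σ_{j≥2} x_j∂_{x_j}² − 2Σ_{j≥2} x_j∂_{x_j}∂_{x₁} − (|γ²|+d)∂_{x₁}
 + Σ_{j≥2}(γ_j+1)∂_{x_j}`, where `g k` is the paper's `γ_{k+2}` for `k = 0, …, d`
(so `∑ k, g k = γ₂+⋯+γ_{d+1}` and the paper's dimension `d` is Lean's `d+1`). -/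
noncomputable def D2op {d : ℕ} (g : Fin (d + 1) → ℝ) (f : (Fin (d + 1) → ℝ) → ℝ)
    (x : Fin (d + 1) → ℝ) : ℝ :=
  (1 - x 0) * pd 0 (pd 0 f) x
    + ∑ i ∈ Finset.Ioi (0 : Fin (d + 1)), x i * pd i (pd i f) x
    - 2 * ∑ i ∈ Finset.Ioi (0 : Fin (d + 1)), x i * pd i (pd 0 f) x
    - ((∑ k, g k) + ((d : ℝ) + 1)) * pd 0 f x
    + ∑ i ∈ Finset.Ioi (0 : Fin (d + 1)),
        (g ⟨i.val - 1, lt_of_le_of_lt (Nat.sub_le _ _) i.isLt⟩ + 1) * pd i f x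

/-- The commutation relation `[Ď2, Ď1] = Ď2`. -/
theorem statement9 (d : ℕ) (g : Fin (d + 1) → ℝ)
    (f : (Fin (d + 1) → ℝ) → ℝ) (hf : ContDiff ℝ (⊤ : ℕ∞) f) (x : Fin (d + 1) → ℝ) :
    D2op g (D1op f) x - D1op (D2op g f) x = D2op g f x := by
  have h1 : ∀ i : Fin (d+1), ContDiff ℝ (⊤ : ℕ∞) (pd i f) := fun i => contDiff_pd hf
  have h2 : ∀ i j : Fin (d+1), ContDiff ℝ (⊤ : ℕ∞) (pd i (pd j f)) := fun i j => contDiff_pd (h1 j)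
  -- first derivatives of D1op f, as functions
  have L1 : ∀ k : Fin (d+1), pd k (D1op f)
      = fun z => pd k f z + ((z 0 - 1) * pd k (pd 0 f) z
        + ∑ i ∈ Finset.Ioi (0 : Fin (d+1)), z i * pd k (pd i f) z) := by
    intro k
    funext z
    show pd k (fun y => (y 0 - 1) * pd 0 f y
      + ∑ i ∈ Finset.Ioi (0 : Fin (d+1)), y i * pd i f y) z = _
    rw [pd_shape (h1 0) (fun i => h1 i) k z]
    rcases eq_or_ne k 0 with h | h
    · subst h
      simp
      ring
    · rw [if_neg h, if_pos (Fin.pos_iff_ne_zero.mpr h)]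
      ring
  -- second derivatives of D1op f, pointwise
  have E2 : ∀ (j k : Fin (d+1)) (z : Fin (d+1) → ℝ),
      pd k (fun z' => pd j f z' + ((z' 0 - 1) * pd j (pd 0 f) z'
        + ∑ i ∈ Finset.Ioi (0 : Fin (d+1)), z' i * pd j (pd i f) z')) z
      = pd k (pd j f) z + (((if k = 0 then pd j (pd 0 f) z else 0)
          + (z 0 - 1) * pd k (pd j (pd 0 f)) z)
        + ((if 0 < k then pd j (pd k f) z else 0)
          + ∑ i ∈ Finset.Ioi (0 : Fin (d+1)), z i * pd k (pd j (pd i f)) z)) :=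
    fun j k z => pd_shape' (h1 j) (h2 j 0) (fun i => h2 j i) k z
  -- first derivatives of D2op g f, pointwise
  have L2 : ∀ (k : Fin (d+1)) (z : Fin (d+1) → ℝ),
      pd k (D2op g f) z
      = ((1 - z 0) * pd k (pd 0 (pd 0 f)) z - (if k = 0 then pd 0 (pd 0 f) z else 0))
        + ((if 0 < k then pd k (pd k f) z else 0)
          + ∑ i ∈ Finset.Ioi (0 : Fin (d+1)), z i * pd k (pd i (pd i f)) z)
        - 2 * ((if 0 < k then pd k (pd 0 f) z else 0)
          + ∑ i ∈ Finset.Ioi (0 : Fin (d+1)), z i * pd k (pd i (pd 0 f)) z)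
        - ((∑ k, g k) + ((d : ℝ) + 1)) * pd k (pd 0 f) z
        + ∑ i ∈ Finset.Ioi (0 : Fin (d+1)), (g ⟨i.val - 1, lt_of_le_of_lt (Nat.sub_le _ _) i.isLt⟩ + 1) * pd k (pd i f) z := by
    intro k z
    show pd k (fun y => (1 - y 0) * pd 0 (pd 0 f) y
        + ∑ i ∈ Finset.Ioi (0 : Fin (d+1)), y i * pd i (pd i f) y
        - 2 * ∑ i ∈ Finset.Ioi (0 : Fin (d+1)), y i * pd i (pd 0 f) y
        - ((∑ k, g k) + ((d : ℝ) + 1)) * pd 0 f y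
        + ∑ i ∈ Finset.Ioi (0 : Fin (d+1)), (g ⟨i.val - 1, lt_of_le_of_lt (Nat.sub_le _ _) i.isLt⟩ + 1) * pd i f y) z = _
    rw [pd_shapeD2 ((∑ k, g k) + ((d : ℝ) + 1)) (fun i => g ⟨i.val - 1, lt_of_le_of_lt (Nat.sub_le _ _) i.isLt⟩ + 1) (h2 0 0) (h1 0) (fun i => h2 i i) (fun i => h2 i 0) (fun i => h1 i) k z]
  -- Schwarz normalization rules
  have n1 : ∀ i : Fin (d+1), pd 0 (pd i f) = pd i (pd 0 f) := fun i => pd_comm_fun hf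
  have n4 : ∀ i j : Fin (d+1), pd 0 (pd i (pd j f)) = pd i (pd 0 (pd j f)) :=
    fun i j => pd_comm_fun (h1 j)
  have G1 : pd 0 (pd 0 (D1op f)) x
      = 2 * pd 0 (pd 0 f) x + (x 0 - 1) * pd 0 (pd 0 (pd 0 f)) x
        + ∑ j ∈ Finset.Ioi (0 : Fin (d+1)), x j * pd 0 (pd 0 (pd j f)) x := by
    rw [L1 0, E2 0 0 x, if_pos rfl, if_neg (lt_irrefl (0 : Fin (d+1)))]
    ring
  have G2 : ∑ i ∈ Finset.Ioi (0 : Fin (d+1)), x i * pd i (pd i (D1op f)) x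
      = ∑ i ∈ Finset.Ioi (0 : Fin (d+1)), x i * (2 * pd i (pd i f) x
        + (x 0 - 1) * pd i (pd i (pd 0 f)) x
        + ∑ j ∈ Finset.Ioi (0 : Fin (d+1)), x j * pd i (pd i (pd j f)) x) := by
    refine Finset.sum_congr rfl fun i hi => ?_
    have hip : 0 < i := Finset.mem_Ioi.mp hi
    rw [L1 i, E2 i i x, if_neg (Fin.pos_iff_ne_zero.mp hip), if_pos hip]
    ring
  have G3 : ∑ i ∈ Finset.Ioi (0 : Fin (d+1)), x i * pd i (pd 0 (D1op f)) x
      = ∑ i ∈ Finset.Ioi (0 : Fin (d+1)), x i * (pd i (pd 0 f) x + pd 0 (pd i f) x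
        + (x 0 - 1) * pd i (pd 0 (pd 0 f)) x
        + ∑ j ∈ Finset.Ioi (0 : Fin (d+1)), x j * pd i (pd 0 (pd j f)) x) := by
    refine Finset.sum_congr rfl fun i hi => ?_
    have hip : 0 < i := Finset.mem_Ioi.mp hi
    rw [L1 0, E2 0 i x, if_neg (Fin.pos_iff_ne_zero.mp hip), if_pos hip]
    ring
  have G5 : ∑ i ∈ Finset.Ioi (0 : Fin (d+1)),
        (g ⟨i.val - 1, lt_of_le_of_lt (Nat.sub_le _ _) i.isLt⟩ + 1) * pd i (D1op f) x
      = ∑ i ∈ Finset.Ioi (0 : Fin (d+1)),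
        (g ⟨i.val - 1, lt_of_le_of_lt (Nat.sub_le _ _) i.isLt⟩ + 1)
          * (pd i f x + (x 0 - 1) * pd i (pd 0 f) x
            + ∑ j ∈ Finset.Ioi (0 : Fin (d+1)), x j * pd i (pd j f) x) := by
    refine Finset.sum_congr rfl fun i hi => ?_
    simp only [L1 i]
    ring
  have G4 : pd 0 (D1op f) x
      = pd 0 f x + (x 0 - 1) * pd 0 (pd 0 f) x
        + ∑ i ∈ Finset.Ioi (0 : Fin (d+1)), x i * pd 0 (pd i f) x := by
    rw [L1 0]; ring
  have H0 : pd 0 (D2op g f) x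
      = (1 - x 0) * pd 0 (pd 0 (pd 0 f)) x - pd 0 (pd 0 f) x
        + ∑ i ∈ Finset.Ioi (0 : Fin (d+1)), x i * pd 0 (pd i (pd i f)) x
        - 2 * ∑ i ∈ Finset.Ioi (0 : Fin (d+1)), x i * pd 0 (pd i (pd 0 f)) x
        - ((∑ k, g k) + ((d : ℝ) + 1)) * pd 0 (pd 0 f) x
        + ∑ i ∈ Finset.Ioi (0 : Fin (d+1)),
            (g ⟨i.val - 1, lt_of_le_of_lt (Nat.sub_le _ _) i.isLt⟩ + 1) * pd 0 (pd i f) x := by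
    rw [L2 0 x, if_pos rfl, if_neg (lt_irrefl (0 : Fin (d+1)))]
    ring
  have Hi : ∑ i ∈ Finset.Ioi (0 : Fin (d+1)), x i * pd i (D2op g f) x
      = ∑ i ∈ Finset.Ioi (0 : Fin (d+1)), x i * ((1 - x 0) * pd i (pd 0 (pd 0 f)) x
        + pd i (pd i f) x
        + ∑ j ∈ Finset.Ioi (0 : Fin (d+1)), x j * pd i (pd j (pd j f)) x
        - 2 * pd i (pd 0 f) x
        - 2 * ∑ j ∈ Finset.Ioi (0 : Fin (d+1)), x j * pd i (pd j (pd 0 f)) x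
        - ((∑ k, g k) + ((d : ℝ) + 1)) * pd i (pd 0 f) x
        + ∑ j ∈ Finset.Ioi (0 : Fin (d+1)),
            (g ⟨j.val - 1, lt_of_le_of_lt (Nat.sub_le _ _) j.isLt⟩ + 1) * pd i (pd j f) x) := by
    refine Finset.sum_congr rfl fun i hi => ?_
    have hip : 0 < i := Finset.mem_Ioi.mp hi
    rw [L2 i x, if_neg (Fin.pos_iff_ne_zero.mp hip), if_pos hip, if_pos hip]
    ring
  have swap3 : ∀ a c : Fin (d+1), pd c (pd a (pd a f)) x = pd a (pd a (pd c f)) x := by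
    intro a c
    rw [pd_comm (h1 a), pd_comm_fun (i := c) (j := a) hf]
  have Wswap : ∑ i ∈ Finset.Ioi (0 : Fin (d+1)),
        x i * ∑ j ∈ Finset.Ioi (0 : Fin (d+1)), x j * pd i (pd j (pd j f)) x
      = ∑ i ∈ Finset.Ioi (0 : Fin (d+1)),
        x i * ∑ j ∈ Finset.Ioi (0 : Fin (d+1)), x j * pd i (pd i (pd j f)) x := by
    simp only [Finset.mul_sum]
    conv_lhs => rw [Finset.sum_comm]
    refine Finset.sum_congr rfl fun a _ => Finset.sum_congr rfl fun c _ => ?_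
    rw [swap3 a c]
    ring
  have Bswap : ∑ i ∈ Finset.Ioi (0 : Fin (d+1)),
        x i * ∑ j ∈ Finset.Ioi (0 : Fin (d+1)),
          (g ⟨j.val - 1, lt_of_le_of_lt (Nat.sub_le _ _) j.isLt⟩ + 1) * pd i (pd j f) x
      = ∑ i ∈ Finset.Ioi (0 : Fin (d+1)),
        (g ⟨i.val - 1, lt_of_le_of_lt (Nat.sub_le _ _) i.isLt⟩ + 1)
          * ∑ j ∈ Finset.Ioi (0 : Fin (d+1)), x j * pd i (pd j f) x := by
    simp only [Finset.mul_sum]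
    conv_lhs => rw [Finset.sum_comm]
    refine Finset.sum_congr rfl fun a _ => Finset.sum_congr rfl fun c _ => ?_
    rw [pd_comm (i := c) (j := a) hf]
    ring
  have G2s := sum_split (Finset.Ioi (0 : Fin (d+1))) 2 (x 0 - 1) 1 0 0 0 0
    (fun i => x i * pd i (pd i f) x)
    (fun i => x i * pd i (pd i (pd 0 f)) x)
    (fun i => x i * ∑ j ∈ Finset.Ioi (0 : Fin (d+1)), x j * pd i (pd i (pd j f)) x)
    (fun _ => 0) (fun _ => 0) (fun _ => 0) (fun _ => 0)
    (fun i => x i * (2 * pd i (pd i f) x + (x 0 - 1) * pd i (pd i (pd 0 f)) x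
      + ∑ j ∈ Finset.Ioi (0 : Fin (d+1)), x j * pd i (pd i (pd j f)) x))
    (fun i _ => by ring)
  have G3s := sum_split (Finset.Ioi (0 : Fin (d+1))) 2 (x 0 - 1) 1 0 0 0 0
    (fun i => x i * pd i (pd 0 f) x)
    (fun i => x i * pd i (pd 0 (pd 0 f)) x)
    (fun i => x i * ∑ j ∈ Finset.Ioi (0 : Fin (d+1)), x j * pd i (pd j (pd 0 f)) x)
    (fun _ => 0) (fun _ => 0) (fun _ => 0) (fun _ => 0)
    (fun i => x i * (pd i (pd 0 f) x + pd i (pd 0 f) x + (x 0 - 1) * pd i (pd 0 (pd 0 f)) x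
      + ∑ j ∈ Finset.Ioi (0 : Fin (d+1)), x j * pd i (pd j (pd 0 f)) x))
    (fun i _ => by ring)
  have G5s := sum_split (Finset.Ioi (0 : Fin (d+1))) 1 (x 0 - 1) 1 0 0 0 0
    (fun i => (g ⟨i.val - 1, lt_of_le_of_lt (Nat.sub_le _ _) i.isLt⟩ + 1) * pd i f x)
    (fun i => (g ⟨i.val - 1, lt_of_le_of_lt (Nat.sub_le _ _) i.isLt⟩ + 1) * pd i (pd 0 f) x)
    (fun i => (g ⟨i.val - 1, lt_of_le_of_lt (Nat.sub_le _ _) i.isLt⟩ + 1)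
      * ∑ j ∈ Finset.Ioi (0 : Fin (d+1)), x j * pd i (pd j f) x)
    (fun _ => 0) (fun _ => 0) (fun _ => 0) (fun _ => 0)
    (fun i => (g ⟨i.val - 1, lt_of_le_of_lt (Nat.sub_le _ _) i.isLt⟩ + 1)
      * (pd i f x + (x 0 - 1) * pd i (pd 0 f) x
        + ∑ j ∈ Finset.Ioi (0 : Fin (d+1)), x j * pd i (pd j f) x))
    (fun i _ => by ring)
  have His := sum_split (Finset.Ioi (0 : Fin (d+1))) (1 - x 0) 1 1 (-(2 + ((∑ k, g k) + ((d : ℝ) + 1)))) (-2) 1 0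
    (fun i => x i * pd i (pd 0 (pd 0 f)) x)
    (fun i => x i * pd i (pd i f) x)
    (fun i => x i * ∑ j ∈ Finset.Ioi (0 : Fin (d+1)), x j * pd i (pd j (pd j f)) x)
    (fun i => x i * pd i (pd 0 f) x)
    (fun i => x i * ∑ j ∈ Finset.Ioi (0 : Fin (d+1)), x j * pd i (pd j (pd 0 f)) x)
    (fun i => x i * ∑ j ∈ Finset.Ioi (0 : Fin (d+1)),
      (g ⟨j.val - 1, lt_of_le_of_lt (Nat.sub_le _ _) j.isLt⟩ + 1) * pd i (pd j f) x)
    (fun _ => 0)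
    (fun i => x i * ((1 - x 0) * pd i (pd 0 (pd 0 f)) x
      + pd i (pd i f) x
      + ∑ j ∈ Finset.Ioi (0 : Fin (d+1)), x j * pd i (pd j (pd j f)) x
      - 2 * pd i (pd 0 f) x
      - 2 * ∑ j ∈ Finset.Ioi (0 : Fin (d+1)), x j * pd i (pd j (pd 0 f)) x
      - ((∑ k, g k) + ((d : ℝ) + 1)) * pd i (pd 0 f) x
      + ∑ j ∈ Finset.Ioi (0 : Fin (d+1)),
          (g ⟨j.val - 1, lt_of_le_of_lt (Nat.sub_le _ _) j.isLt⟩ + 1) * pd i (pd j f) x))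
    (fun i _ => by ring)
  simp only [D2op, D1op]
  rw [G1, G2, G3, G5, G4, H0, Hi]
  simp only [n1, n4]
  rw [G2s, G3s, G5s, His, Wswap, Bswap]
  ring
end

section
/- If α+β+1 = |γ|+d (where |γ| = γ₁+⋯+γ_{d+1}), then the Appell–Lauricella operator M_d^γ = Σ_k (1−x_k)x_k ∂_{x_k}² − 2Σ_{k<l} x_k x_l ∂_{x_k}∂_{x_l} + Σ_k [(γ_k+1) − (|γ|+d+1)x_k]∂_{x_k} equals Ď2 − Ď1² − (|γ|+d)Ď1, where Ď1 and Ď2 are the multivariable operators Ď1 = (x₁−1)∂_{x₁}+Σ_{j≥2} x_j∂_{x_j} and Ď2 = (1−x₁)∂_{x₁}² + Σ_{j≥2} x_j∂_{x_j}² − 2Σ_{j≥2} x_j∂_{x_j}∂_{x₁} − (|γ^2|+d)∂_{x₁} + Σ_{j≥2}(γ_j+1)∂_{x_j}. -/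
/-- The Appell–Lauricella operator `M_d^γ` in `d+1` variables, with parameters
`γ : Fin (d+2) → ℝ` (so `γ k` is the paper's `γ_{k+1}`). -/
noncomputable def Mop {d : ℕ} (γ : Fin (d + 2) → ℝ) (f : (Fin (d + 1) → ℝ) → ℝ)
    (x : Fin (d + 1) → ℝ) : ℝ :=
  ∑ i, (1 - x i) * x i * pd i (pd i f) x
    - 2 * ∑ i : Fin (d + 1), ∑ l ∈ Finset.Ioi i, x i * x l * pd i (pd l f) x
    + ∑ i, ((γ i.castSucc + 1) - ((∑ k, γ k) + ((d : ℝ) + 1) + 1) * x i) * pd i f x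

variable {m : ℕ}

lemma pd_hasDerivAt {f : (Fin m → ℝ) → ℝ} {x : Fin m → ℝ} (hf : DifferentiableAt ℝ f x)
    (i : Fin m) :
    HasDerivAt (fun t => f (Function.update x i t)) (fderiv ℝ f x (Pi.single i 1)) (x i) := by
  have h1 := hasDerivAt_update x i (x i)
  have h2 : HasFDerivAt f (fderiv ℝ f x) (Function.update x i (x i)) := by
    rw [Function.update_eq_self]; exact hf.hasFDerivAt
  exact h2.comp_hasDerivAt (x i) h1

lemma pd_eq {f : (Fin m → ℝ) → ℝ} {x : Fin m → ℝ} (hf : DifferentiableAt ℝ f x) (i : Fin m) :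
    pd i f x = fderiv ℝ f x (Pi.single i 1) := (pd_hasDerivAt hf i).deriv

open scoped ContDiff in
lemma contDiff_pdF {f : (Fin m → ℝ) → ℝ} (hf : ContDiff ℝ (⊤ : ℕ∞) f) (v : Fin m → ℝ) :
    ContDiff ℝ ∞ (fun y => fderiv ℝ f y v) :=
  (contDiff_infty_iff_fderiv.mp (hf.of_le (by simp))).2.clm_apply contDiff_const

lemma pd_pd_eq' {f : (Fin m → ℝ) → ℝ} (hf : ContDiff ℝ (⊤ : ℕ∞) f) (x : Fin m → ℝ) (k i : Fin m) :
    pd k (pd i f) x = fderiv ℝ (fun y => fderiv ℝ f y (Pi.single i 1)) x (Pi.single k 1) := by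
  have hd : Differentiable ℝ f := hf.differentiable (by simp)
  have h1 : pd i f = fun y => fderiv ℝ f y (Pi.single i 1) := funext fun y => pd_eq (hd y) i
  rw [h1, pd_eq ((contDiff_pdF hf _).differentiable (by norm_num) x) k]

lemma pd_pd_eq {f : (Fin m → ℝ) → ℝ} (hf : ContDiff ℝ (⊤ : ℕ∞) f) (x : Fin m → ℝ) (k i : Fin m) :
    pd k (pd i f) x = fderiv ℝ (fderiv ℝ f) x (Pi.single k 1) (Pi.single i 1) := by
  rw [pd_pd_eq' hf,
    fderiv_clm_apply (((contDiff_infty_iff_fderiv.mp (hf.of_le (by simp))).2.differentiable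
      (by norm_num)) x) (differentiableAt_const _)]
  simp

lemma pd_pd_symm {f : (Fin m → ℝ) → ℝ} (hf : ContDiff ℝ (⊤ : ℕ∞) f) (x : Fin m → ℝ) (k i : Fin m) :
    pd k (pd i f) x = pd i (pd k f) x := by
  rw [pd_pd_eq hf, pd_pd_eq hf]
  exact second_derivative_symmetric (fun y => ((hf.differentiable (by simp)) y).hasFDerivAt)
    (((contDiff_infty_iff_fderiv.mp (hf.of_le (by simp))).2.differentiable (by norm_num) x).hasFDerivAt) _ _

lemma pd_D1op {d : ℕ} {f : (Fin (d + 1) → ℝ) → ℝ} (hf : ContDiff ℝ (⊤ : ℕ∞) f)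
    (x : Fin (d + 1) → ℝ) (k : Fin (d + 1)) :
    pd k (D1op f) x = pd k f x + (x 0 - 1) * pd k (pd 0 f) x
      + ∑ i ∈ Finset.Ioi (0 : Fin (d + 1)), x i * pd k (pd i f) x := by
  classical
  have hd : Differentiable ℝ f := hf.differentiable (by simp)
  set F : Fin (d + 1) → (Fin (d + 1) → ℝ) → ℝ := fun i y => fderiv ℝ f y (Pi.single i 1) with hF
  have hFd : ∀ i, Differentiable ℝ (F i) := fun i =>
    (contDiff_pdF hf _).differentiable (by norm_num)
  have h1 : D1op f = fun y => (y 0 - 1) * F 0 y + ∑ i ∈ Finset.Ioi (0 : Fin (d + 1)),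
      y i * F i y := by
    funext y
    unfold D1op
    rw [pd_eq (hd y)]
    congr 1
    exact Finset.sum_congr rfl fun i _ => by rw [pd_eq (hd y)]
  have hcoord : ∀ j, HasDerivAt (fun t => Function.update x k t j)
      (if j = k then (1:ℝ) else 0) (x k) := by
    intro j
    rcases eq_or_ne j k with h | h
    · subst h
      simp only [Function.update_self, if_pos rfl]
      exact hasDerivAt_id _
    · simp only [Function.update_of_ne h, if_neg h]
      exact hasDerivAt_const _ _
  have hFk : ∀ i, HasDerivAt (fun t => F i (Function.update x k t))
      (pd k (pd i f) x) (x k) := by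
    intro i
    have h2 := pd_hasDerivAt (hFd i x) k
    rwa [← pd_pd_eq' hf x k i] at h2
  have H := (((hcoord 0).sub_const 1).mul (hFk 0)).add
    (HasDerivAt.sum (fun i (_ : i ∈ Finset.Ioi (0 : Fin (d + 1))) => (hcoord i).mul (hFk i)))
  have hval : pd k (D1op f) x
      = ((if (0 : Fin (d + 1)) = k then (1:ℝ) else 0) * F 0 x
          + (x 0 - 1) * pd k (pd 0 f) x)
        + ∑ i ∈ Finset.Ioi (0 : Fin (d + 1)),
            ((if i = k then (1:ℝ) else 0) * F i x + x i * pd k (pd i f) x) := by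
    rw [pd, h1]
    have := H.deriv
    simp only [Function.update_eq_self] at this
    rw [← this]
    congr 1
    funext t; simp [Finset.sum_apply]
  rw [hval]
  have hFx : ∀ i, F i x = pd i f x := fun i => (pd_eq (hd x) i).symm
  rw [Finset.sum_add_distrib]
  have hsum : (if (0 : Fin (d + 1)) = k then (1:ℝ) else 0) * F 0 x
      + ∑ i ∈ Finset.Ioi (0 : Fin (d + 1)), (if i = k then (1:ℝ) else 0) * F i x
      = pd k f x := by
    rcases eq_or_ne k 0 with hk | hk
    · subst hk
      rw [if_pos rfl, one_mul, hFx, Finset.sum_eq_zero, add_zero]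
      intro i hi
      rw [if_neg (Finset.mem_Ioi.mp hi).ne', zero_mul]
    · rw [if_neg (Ne.symm hk), zero_mul, zero_add, Finset.sum_eq_single k]
      · rw [if_pos rfl, one_mul, hFx]
      · intro i _ hik; rw [if_neg hik, zero_mul]
      · intro hk2
        exact absurd (Finset.mem_Ioi.mpr (Fin.pos_of_ne_zero hk)) hk2
  linarith [hsum]


lemma sum_Ioi_zero {d : ℕ} (h : Fin (d+1) → ℝ) :
    ∑ i ∈ Finset.Ioi (0 : Fin (d+1)), h i = (∑ i, h i) - h 0 := by
  rw [eq_sub_iff_add_eq, add_comm]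
  rw [Finset.add_sum_Ioi_eq_sum_Ici]
  refine Finset.sum_congr ?_ fun _ _ => rfl
  ext i; simp [Fin.zero_le]

lemma double_sum_helper (d : ℕ) (c : Fin (d+1) → Fin (d+1) → ℝ) (hsym : ∀ i l, c i l = c l i) :
    2 * ∑ i, ∑ l ∈ Finset.Ioi i, c i l = (∑ i, ∑ l, c i l) - ∑ i, c i i := by
  have h := Finset.sum_sum_Ioi_add_eq_sum_sum_off_diag c
  have h1 : 2 * ∑ i, ∑ l ∈ Finset.Ioi i, c i l
      = ∑ i : Fin (d+1), ∑ l ∈ Finset.Ioi i, (c l i + c i l) := by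
    rw [Finset.mul_sum]
    exact Finset.sum_congr rfl fun i _ => by
      rw [Finset.mul_sum]; exact Finset.sum_congr rfl fun l _ => by rw [hsym i l]; ring
  rw [h1, h]
  simp only [Finset.compl_singleton]
  trans ∑ i : Fin (d+1), ((∑ j, c j i) - c i i)
  · refine Finset.sum_congr rfl fun i _ => ?_
    rw [eq_sub_iff_add_eq]
    convert Finset.sum_erase_add Finset.univ (fun j => c j i) (Finset.mem_univ i) using 2
  · rw [Finset.sum_sub_distrib]
    congr 1
    rw [Finset.sum_comm]

/-- If `α+β+1 = |γ|+d`, then the Appell–Lauricella operator equals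
`Ď2 − Ď1² − (|γ|+d)Ď1`. -/
theorem statement10 (d : ℕ) (γ : Fin (d + 2) → ℝ) (α β : ℝ)
    (h : α + β + 1 = (∑ k, γ k) + ((d : ℝ) + 1))
    (f : (Fin (d + 1) → ℝ) → ℝ) (hf : ContDiff ℝ (⊤ : ℕ∞) f) (x : Fin (d + 1) → ℝ) :
    Mop γ f x
      = D2op (fun k : Fin (d + 1) => γ k.succ) f x - D1op (D1op f) x
          - ((∑ k, γ k) + ((d : ℝ) + 1)) * D1op f x := by
  have hDD : D1op (D1op f) x
      = (x 0 - 1) * (pd 0 f x + (x 0 - 1) * pd 0 (pd 0 f) x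
          + ∑ i ∈ Finset.Ioi (0 : Fin (d + 1)), x i * pd 0 (pd i f) x)
        + ∑ k ∈ Finset.Ioi (0 : Fin (d + 1)), x k * (pd k f x + (x 0 - 1) * pd k (pd 0 f) x
          + ∑ i ∈ Finset.Ioi (0 : Fin (d + 1)), x i * pd k (pd i f) x) := by
    rw [D1op]
    congr 1
    · rw [pd_D1op hf x 0]
    · exact Finset.sum_congr rfl fun i _ => by rw [pd_D1op hf x i]
  rw [Mop, D2op, hDD, D1op]
  have hsymm : ∀ i l : Fin (d + 1),
      x i * x l * pd i (pd l f) x = x l * x i * pd l (pd i f) x := fun i l => by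
    rw [pd_pd_symm hf x i l]; ring
  have HL1 : ∑ i : Fin (d + 1), (1 - x i) * x i * pd i (pd i f) x
      = ∑ i : Fin (d + 1), x i * pd i (pd i f) x
        - ∑ i : Fin (d + 1), x i * x i * pd i (pd i f) x := by
    rw [← Finset.sum_sub_distrib]; exact Finset.sum_congr rfl fun i _ => by ring
  have HL2 : 2 * ∑ i : Fin (d + 1), ∑ l ∈ Finset.Ioi i, x i * x l * pd i (pd l f) x
      = (∑ i : Fin (d + 1), ∑ l : Fin (d + 1), x i * x l * pd i (pd l f) x)
        - ∑ i : Fin (d + 1), x i * x i * pd i (pd i f) x :=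
    double_sum_helper d _ hsymm
  have HL3 : ∑ i : Fin (d + 1),
        (γ i.castSucc + 1 - (∑ k : Fin (d + 2), γ k + ((d : ℝ) + 1) + 1) * x i) * pd i f x
      = ∑ i : Fin (d + 1), γ i.castSucc * pd i f x + ∑ i : Fin (d + 1), pd i f x
        - (∑ k : Fin (d + 2), γ k + ((d : ℝ) + 1) + 1) * ∑ i : Fin (d + 1), x i * pd i f x := by
    rw [Finset.mul_sum, ← Finset.sum_add_distrib, ← Finset.sum_sub_distrib]
    exact Finset.sum_congr rfl fun i _ => by ring
  have HR1 : ∑ i ∈ Finset.Ioi (0 : Fin (d + 1)), x i * pd i (pd i f) x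
      = ∑ i : Fin (d + 1), x i * pd i (pd i f) x - x 0 * pd 0 (pd 0 f) x :=
    sum_Ioi_zero _
  have HR2 : ∑ i ∈ Finset.Ioi (0 : Fin (d + 1)), x i * pd i (pd 0 f) x
      = ∑ i : Fin (d + 1), x i * pd 0 (pd i f) x - x 0 * pd 0 (pd 0 f) x := by
    trans (∑ i ∈ Finset.Ioi (0 : Fin (d + 1)), x i * pd 0 (pd i f) x)
    · exact Finset.sum_congr rfl fun i _ => by rw [pd_pd_symm hf x i 0]
    · exact sum_Ioi_zero _
  have hSg : ∑ k : Fin (d + 1), γ k.succ = (∑ k, γ k) - γ 0 := by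
    rw [Fin.sum_univ_succ γ]; ring
  have HR3 : ∑ i ∈ Finset.Ioi (0 : Fin (d + 1)),
        (γ (⟨i.val - 1, lt_of_le_of_lt (Nat.sub_le _ _) i.isLt⟩ : Fin (d + 1)).succ + 1)
          * pd i f x
      = ∑ i : Fin (d + 1), γ i.castSucc * pd i f x + ∑ i : Fin (d + 1), pd i f x
        - (γ 0 + 1) * pd 0 f x := by
    trans (∑ i ∈ Finset.Ioi (0 : Fin (d + 1)), (γ i.castSucc + 1) * pd i f x)
    · refine Finset.sum_congr rfl fun i hi => ?_
      have hi0 : i ≠ 0 := (Finset.mem_Ioi.mp hi).ne'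
      have : i.val ≠ 0 := fun hv => hi0 (Fin.ext hv)
      congr 3
      ext
      simp
      omega
    · rw [sum_Ioi_zero]
      have h1 : ∑ i : Fin (d + 1), (γ i.castSucc + 1) * pd i f x
          = ∑ i : Fin (d + 1), γ i.castSucc * pd i f x + ∑ i : Fin (d + 1), pd i f x := by
        rw [← Finset.sum_add_distrib]; exact Finset.sum_congr rfl fun i _ => by ring
      rw [h1]
      congr 2
  have HR5 : ∑ i ∈ Finset.Ioi (0 : Fin (d + 1)), x i * pd 0 (pd i f) x
      = ∑ i : Fin (d + 1), x i * pd 0 (pd i f) x - x 0 * pd 0 (pd 0 f) x :=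
    sum_Ioi_zero _
  have HR6 : ∑ k ∈ Finset.Ioi (0 : Fin (d + 1)),
        x k * (pd k f x + (x 0 - 1) * pd k (pd 0 f) x
          + ∑ i ∈ Finset.Ioi (0 : Fin (d + 1)), x i * pd k (pd i f) x)
      = (∑ i : Fin (d + 1), x i * pd i f x - x 0 * pd 0 f x)
        + (x 0 - 1) * (∑ i : Fin (d + 1), x i * pd 0 (pd i f) x - x 0 * pd 0 (pd 0 f) x)
        + ((∑ i : Fin (d + 1), ∑ l : Fin (d + 1), x i * x l * pd i (pd l f) x
              - x 0 * ∑ i : Fin (d + 1), x i * pd 0 (pd i f) x)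
            - x 0 * (∑ i : Fin (d + 1), x i * pd 0 (pd i f) x - x 0 * pd 0 (pd 0 f) x)) := by
    have e1 : ∑ k ∈ Finset.Ioi (0 : Fin (d + 1)), x k * pd k f x
        = ∑ i : Fin (d + 1), x i * pd i f x - x 0 * pd 0 f x := sum_Ioi_zero _
    have e2 : ∑ k ∈ Finset.Ioi (0 : Fin (d + 1)), x k * pd 0 (pd k f) x
        = ∑ i : Fin (d + 1), x i * pd 0 (pd i f) x - x 0 * pd 0 (pd 0 f) x := sum_Ioi_zero _
    have e3 : ∑ k ∈ Finset.Ioi (0 : Fin (d + 1)),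
          x k * (∑ i : Fin (d + 1), x i * pd k (pd i f) x)
        = ∑ i : Fin (d + 1), ∑ l : Fin (d + 1), x i * x l * pd i (pd l f) x
          - x 0 * ∑ i : Fin (d + 1), x i * pd 0 (pd i f) x := by
      rw [sum_Ioi_zero]
      congr 1
      exact Finset.sum_congr rfl fun k _ => by
        rw [Finset.mul_sum]; exact Finset.sum_congr rfl fun i _ => (mul_assoc _ _ _).symm
    calc ∑ k ∈ Finset.Ioi (0 : Fin (d + 1)),
          x k * (pd k f x + (x 0 - 1) * pd k (pd 0 f) x
            + ∑ i ∈ Finset.Ioi (0 : Fin (d + 1)), x i * pd k (pd i f) x)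
        = ∑ k ∈ Finset.Ioi (0 : Fin (d + 1)),
            (x k * pd k f x + (x 0 - 1) * (x k * pd 0 (pd k f) x)
              + (x k * (∑ i : Fin (d + 1), x i * pd k (pd i f) x)
                  - x 0 * (x k * pd 0 (pd k f) x))) := by
          refine Finset.sum_congr rfl fun k _ => ?_
          rw [sum_Ioi_zero (fun i => x i * pd k (pd i f) x), pd_pd_symm hf x k 0]
          ring
      _ = _ := by
          rw [Finset.sum_add_distrib, Finset.sum_add_distrib, Finset.sum_sub_distrib,
            ← Finset.mul_sum, ← Finset.mul_sum, e1, e2, e3]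
  have HR7 : ∑ i ∈ Finset.Ioi (0 : Fin (d + 1)), x i * pd i f x
      = ∑ i : Fin (d + 1), x i * pd i f x - x 0 * pd 0 f x := sum_Ioi_zero _
  linear_combination HL1 - HL2 + HL3 - HR1 + 2 * HR2 + pd 0 f x * hSg - HR3
    + (x 0 - 1) * HR5 + HR6 + ((∑ k, γ k) + ((d : ℝ) + 1)) * HR7
end

section
/- Under the change of variables z₁ = x₁, z_j = x_j/(1−x₁) for j = 2,…,d, if P(x) = p(z₁) q(z₂,…,z_d), then Ď1[P](x) = ((z₁−1)p'(z₁)) q(z₂,…,z_d), i.e., Ď1 acts only on the first factor as the one-variable operator (z₁−1)d/dz₁. -/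
/-- Under the change of variables `z₁ = x₁`, `z_j = x_j/(1−x₁)`, if
`P(x) = p(z₁)q(z₂,…,z_d)` then `Ď1[P](x) = ((z₁−1)p'(z₁)) q(z₂,…,z_d)`.
(The paper's dimension `d ≥ 2` is Lean's `d+2`.) -/
theorem statement12 (d : ℕ) (p : ℝ → ℝ) (hp : ContDiff ℝ (⊤ : ℕ∞) p)
    (q : (Fin (d + 1) → ℝ) → ℝ) (hq : ContDiff ℝ (⊤ : ℕ∞) q)
    (x : Fin (d + 2) → ℝ) (hx : x 0 ≠ 1) :
    D1op (fun y : Fin (d + 2) → ℝ =>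
        p (y 0) * q (fun j : Fin (d + 1) => y j.succ / (1 - y 0))) x
      = (x 0 - 1) * deriv p (x 0) * q (fun j : Fin (d + 1) => x j.succ / (1 - x 0)) := by
  have hx' : (1 : ℝ) - x 0 ≠ 0 := sub_ne_zero.2 (Ne.symm hx)
  set c : ℝ := x 0 with hc
  set z : Fin (d + 1) → ℝ := fun j => x j.succ / (1 - c) with hz
  set L := fderiv ℝ q z with hL
  have hqd : DifferentiableAt ℝ q z := (hq.differentiable (by simp)).differentiableAt
  have hqz : HasFDerivAt q L z := hqd.hasFDerivAt
  -- expansion of L on a vector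
  have hLsum : ∀ v : Fin (d + 1) → ℝ, L v = ∑ j, v j * L (Pi.single j 1) := by
    intro v
    have hv : v = ∑ j, v j • (Pi.single j (1 : ℝ) : Fin (d + 1) → ℝ) := by
      funext i
      simp [Finset.sum_apply, Pi.single_apply]
    conv_lhs => rw [hv]
    rw [map_sum]
    simp [smul_eq_mul]
  set a : Fin (d + 1) → ℝ := fun j => L (Pi.single j 1) with ha
  set S : ℝ := ∑ j, x j.succ * a j with hS
  -- derivative in the 0-th direction
  have h0 : pd 0 (fun y : Fin (d + 2) → ℝ =>
      p (y 0) * q (fun j : Fin (d + 1) => y j.succ / (1 - y 0))) x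
      = deriv p c * q z + p c * (((1 - c) ^ 2)⁻¹ * S) := by
    have e0 : (fun t : ℝ => (fun y : Fin (d + 2) → ℝ =>
        p (y 0) * q (fun j : Fin (d + 1) => y j.succ / (1 - y 0))) (Function.update x 0 t))
        = fun t : ℝ => p t * q (fun j : Fin (d + 1) => x j.succ / (1 - t)) := by
      funext t
      simp [Function.update_apply, Fin.succ_ne_zero]
    have hp' : HasDerivAt p (deriv p c) c :=
      ((hp.differentiable (by simp)).differentiableAt).hasDerivAt
    have hu : HasDerivAt (fun t : ℝ => fun j : Fin (d + 1) => x j.succ / (1 - t))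
        (fun j : Fin (d + 1) => x j.succ / (1 - c) ^ 2) c := by
      rw [hasDerivAt_pi]
      intro j
      have h1 : HasDerivAt (fun t : ℝ => 1 - t) (-1) c := (hasDerivAt_id c).const_sub 1
      have := (hasDerivAt_const c (x j.succ)).div h1 hx'
      convert this using 1
      · rfl
      · rfl
      · ring
    have hcomp : HasDerivAt (fun t : ℝ => q (fun j : Fin (d + 1) => x j.succ / (1 - t)))
        (L (fun j : Fin (d + 1) => x j.succ / (1 - c) ^ 2)) c := by
      have hz' : z = fun j : Fin (d + 1) => x j.succ / (1 - c) := rfl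
      exact (hz' ▸ hqz).comp_hasDerivAt c hu
    have hmul := hp'.mul hcomp
    rw [pd, e0]
    rw [← hc, show (fun t : ℝ => p t * q (fun j : Fin (d + 1) => x j.succ / (1 - t))) = (p * fun t : ℝ => q (fun j : Fin (d + 1) => x j.succ / (1 - t))) from rfl, hmul.deriv]
    have : L (fun j : Fin (d + 1) => x j.succ / (1 - c) ^ 2) = ((1 - c) ^ 2)⁻¹ * S := by
      rw [hLsum, hS, Finset.mul_sum]
      exact Finset.sum_congr rfl fun j _ => by ring
    rw [this]
  -- derivative in the (k+1)-th direction
  have hsucc : ∀ k : Fin (d + 1), pd k.succ (fun y : Fin (d + 2) → ℝ =>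
      p (y 0) * q (fun j : Fin (d + 1) => y j.succ / (1 - y 0))) x
      = p c * ((1 - c)⁻¹ * a k) := by
    intro k
    have ek : (fun t : ℝ => (fun y : Fin (d + 2) → ℝ =>
        p (y 0) * q (fun j : Fin (d + 1) => y j.succ / (1 - y 0))) (Function.update x k.succ t))
        = fun t : ℝ => p c * q (Function.update z k (t / (1 - c))) := by
      funext t
      have h00 : Function.update x k.succ t 0 = c :=
        Function.update_of_ne (Fin.succ_ne_zero k).symm _ _
      show p (Function.update x k.succ t 0) *
          q (fun j => Function.update x k.succ t j.succ / (1 - Function.update x k.succ t 0)) = _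
      rw [h00]
      congr 1
      congr 1
      funext j
      by_cases hj : j = k
      · subst hj
        simp
      · have : j.succ ≠ k.succ := fun hh => hj (Fin.succ_injective _ hh)
        simp [Function.update_of_ne this, Function.update_of_ne hj, hz]
    have hw : HasDerivAt (fun t : ℝ => Function.update z k (t / (1 - c)))
        (Pi.single k ((1 - c)⁻¹)) (x k.succ) := by
      rw [hasDerivAt_pi]
      intro j
      by_cases hj : j = k
      · subst hj
        simp only [Function.update_self, Pi.single_eq_same]
        simpa using (hasDerivAt_id (x j.succ)).div_const (1 - c)
      · simp only [Function.update_of_ne hj, Pi.single_eq_of_ne hj]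
        exact hasDerivAt_const _ _
    have hval : Function.update z k (x k.succ / (1 - c)) = z := by
      have : x k.succ / (1 - c) = z k := rfl
      rw [this, Function.update_eq_self]
    have hqz2 : HasFDerivAt q L (Function.update z k (x k.succ / (1 - c))) := by rw [hval]; exact hqz
    have hcomp := hqz2.comp_hasDerivAt (x k.succ) hw
    have hmul := hcomp.const_mul (p c)
    have hder : deriv (fun t : ℝ => p c * q (Function.update z k (t / (1 - c)))) (x k.succ)
        = p c * L (Pi.single k ((1 - c)⁻¹)) := hmul.deriv
    rw [pd, ek, hder]
    have : L (Pi.single k ((1 - c)⁻¹)) = (1 - c)⁻¹ * a k := by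
      rw [hLsum]
      rw [Finset.sum_eq_single k]
      · simp [ha]
      · intro b _ hb
        simp [Pi.single_eq_of_ne hb]
      · intro h
        exact absurd (Finset.mem_univ k) h
    rw [this]
  -- assemble
  rw [D1op, h0]
  rw [show (Finset.Ioi (0 : Fin (d + 2))) = Finset.univ.map (Fin.succEmb (d + 1)) from
    Fin.Ioi_zero_eq_map]
  rw [Finset.sum_map]
  simp only [Fin.coe_succEmb]
  have hsum : ∑ k : Fin (d + 1), x k.succ * pd k.succ (fun y : Fin (d + 2) → ℝ =>
      p (y 0) * q (fun j : Fin (d + 1) => y j.succ / (1 - y 0))) x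
      = p c * ((1 - c)⁻¹ * S) := by
    rw [hS, Finset.mul_sum, Finset.mul_sum]
    refine Finset.sum_congr rfl fun k _ => ?_
    rw [hsucc k]
    ring
  rw [hsum]
  rw [← hc]
  field_simp
  ring
end
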